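/- Let Q(x) = −x₀⁴ + x₁⁴ + x₂⁴ + x₃⁴ and C(x) = −x₀² + x₄² + x₅², homogeneous polynomials on ℝ⁶. Then for every nonzero x ∈ ℝ⁶ with Q(x) = 0 and C(x) = 0, the gradient vectors ∇Q(x) = (−4x₀³, 4x₁³, 4x₂³, 4x₃³, 0, 0) and ∇C(x) = (−2x₀, 0, 0, 0, 2x₄, 2x₅) are linearly independent over ℝ. In particular the real projective variety Z_ℝ(Q, C) ⊂ ℝP⁵ is smooth. -/

import Mathlib

/-!
On the variety `x₀ ≠ 0`: if `x₀ = 0`, then `C = 0` and `Q = 0` are sums of even powers and force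
every coordinate to vanish. Then `Q = 0` forces `xᵢ ≠ 0` for some `i ∈ {1, 2, 3}` and `C = 0`
forces `xⱼ ≠ 0` for some `j ∈ {4, 5}`. As `∇C` vanishes in coordinate `i` and `∇Q` in
coordinate `j`, a relation `s ∇Q + t ∇C = 0` read off in these two coordinates gives `s = 0`
and `t = 0`.
-/

/-- The quartic `Q(x) = −x₀⁴ + x₁⁴ + x₂⁴ + x₃⁴` on `ℝ⁶`. -/
def Qr (x : Fin 6 → ℝ) : ℝ := -x 0 ^ 4 + x 1 ^ 4 + x 2 ^ 4 + x 3 ^ 4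

/-- The quadric `C(x) = −x₀² + x₄² + x₅²` on `ℝ⁶`. -/
def Cr (x : Fin 6 → ℝ) : ℝ := -x 0 ^ 2 + x 4 ^ 2 + x 5 ^ 2

/-- The gradient of `Q`. -/
def gradQr (x : Fin 6 → ℝ) : Fin 6 → ℝ :=
  ![-4 * x 0 ^ 3, 4 * x 1 ^ 3, 4 * x 2 ^ 3, 4 * x 3 ^ 3, 0, 0]

/-- The gradient of `C`. -/
def gradCr (x : Fin 6 → ℝ) : Fin 6 → ℝ :=
  ![-2 * x 0, 0, 0, 0, 2 * x 4, 2 * x 5]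

lemma left_coeff_eq_zero_of_smul_add_smul_eq_zero {K ι : Type*} [Semiring K] [NoZeroDivisors K] {u v : ι → K}
    {s t : K} (h : s • u + t • v = 0) {i : ι} (hu : u i ≠ 0) (hv : v i = 0) : s = 0 := by
  have hi := congrFun h i
  simp only [Pi.add_apply, Pi.smul_apply, smul_eq_mul, hv, mul_zero, add_zero,
    Pi.zero_apply] at hi
  exact (mul_eq_zero.mp hi).resolve_right hu

lemma apply_zero_ne_zero_of_Qr_eq_zero_of_Cr_eq_zero {x : Fin 6 → ℝ} (hx : x ≠ 0)
    (hQ : Qr x = 0) (hC : Cr x = 0) : x 0 ≠ 0 := by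
  intro h0
  simp only [Qr, Cr, h0] at hQ hC
  have p1 : 0 ≤ x 1 ^ 4 := by positivity
  have p2 : 0 ≤ x 2 ^ 4 := by positivity
  have p3 : 0 ≤ x 3 ^ 4 := by positivity
  have p4 : 0 ≤ x 4 ^ 2 := by positivity
  have p5 : 0 ≤ x 5 ^ 2 := by positivity
  have h1 : x 1 = 0 := pow_eq_zero_iff (n := 4) (by norm_num) |>.mp (by linarith)
  have h2 : x 2 = 0 := pow_eq_zero_iff (n := 4) (by norm_num) |>.mp (by linarith)
  have h3 : x 3 = 0 := pow_eq_zero_iff (n := 4) (by norm_num) |>.mp (by linarith)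
  have h4 : x 4 = 0 := pow_eq_zero_iff (n := 2) (by norm_num) |>.mp (by linarith)
  have h5 : x 5 = 0 := pow_eq_zero_iff (n := 2) (by norm_num) |>.mp (by linarith)
  exact hx (funext fun i => by fin_cases i <;> assumption)

lemma exists_gradQr_ne_zero_of_Qr_eq_zero {x : Fin 6 → ℝ} (hQ : Qr x = 0) (h0 : x 0 ≠ 0) :
    ∃ i, gradQr x i ≠ 0 ∧ gradCr x i = 0 := by
  have : x 1 ≠ 0 ∨ x 2 ≠ 0 ∨ x 3 ≠ 0 := by
    by_contra! h
    simp only [Qr, h.1, h.2.1, h.2.2] at hQ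
    exact h0 (by simpa using hQ)
  rcases this with h | h | h
  · exact ⟨1, by simpa [gradQr] using h, rfl⟩
  · exact ⟨2, by simpa [gradQr] using h, rfl⟩
  · exact ⟨3, by simpa [gradQr] using h, rfl⟩

lemma exists_gradCr_ne_zero_of_Cr_eq_zero {x : Fin 6 → ℝ} (hC : Cr x = 0) (h0 : x 0 ≠ 0) :
    ∃ j, gradCr x j ≠ 0 ∧ gradQr x j = 0 := by
  have : x 4 ≠ 0 ∨ x 5 ≠ 0 := by
    by_contra! h
    simp only [Cr, h.1, h.2] at hC
    exact h0 (by simpa using hC)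
  rcases this with h | h
  · exact ⟨4, by simpa [gradCr] using h, rfl⟩
  · exact ⟨5, by simpa [gradCr] using h, rfl⟩

/-- At every nonzero common zero `x ∈ ℝ⁶` of `Q` and `C`, the gradient vectors
`∇Q(x)` and `∇C(x)` are linearly independent over `ℝ`; in particular the real
projective variety `Z_ℝ(Q, C) ⊂ ℝP⁵` is smooth. -/
theorem stmt_8 (x : Fin 6 → ℝ) (hx : x ≠ 0) (h1 : Qr x = 0) (h2 : Cr x = 0) :
    LinearIndependent ℝ ![gradQr x, gradCr x] := by
  have h0 := apply_zero_ne_zero_of_Qr_eq_zero_of_Cr_eq_zero hx h1 h2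
  obtain ⟨i, hQi, hCi⟩ := exists_gradQr_ne_zero_of_Qr_eq_zero h1 h0
  obtain ⟨j, hCj, hQj⟩ := exists_gradCr_ne_zero_of_Cr_eq_zero h2 h0
  rw [LinearIndependent.pair_iff]
  intro s t hst
  exact ⟨left_coeff_eq_zero_of_smul_add_smul_eq_zero hst hQi hCi,
    left_coeff_eq_zero_of_smul_add_smul_eq_zero ((add_comm _ _).trans hst) hCj hQj⟩
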